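/- arXiv:2004.11555 — 2 statements merged into one kernel-verified Lean document; each statement's English description precedes it below -/
import Mathlib

section
/- Fix r̄ > 0, σ ∈ (0, r̄/2), integer k ≥ 3, and horizon T > 2k + 6 with T even. Consider the deterministic MDP on states {d₁,…,d_k, e, f} where from each dᵢ one can stay or move to d_{i+1} (with d_{k+1} = e), from e one can stay or move to f, and from f one must move to d₁; rewards are 0 at each dᵢ, r̄ − σ₁ at e, and r̄ at f, with σ₁ = σ/(k+1). Starting deterministically at d₁, the optimal total reward over horizon T is (T−k)(r̄−σ₁) + σ₁, the total reward of the temporal-concatenation policy (optimal on [0,T/2) concatenated with optimal on [T/2,T)) is 2((T/2 − k)(r̄−σ₁) + σ₁), and hence the regret equals k·r̄ − (k+1)σ₁ = k·r̄ − σ. -/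
open Finset

/-- Allowed transitions in the chain MDP with states `0,…,k-1` (the `dᵢ`), state `k` (= `e`),
and state `k+1` (= `f`): from each `dᵢ` one can stay or move right, from `e` one can stay or
move to `f`, and from `f` one must move to `d₁`. -/
def chainStep (k : ℕ) (s s' : ℕ) : Prop :=
  (s < k ∧ (s' = s ∨ s' = s + 1)) ∨ (s = k ∧ (s' = k ∨ s' = k + 1)) ∨ (s = k + 1 ∧ s' = 0)

/-- Rewards: `0` at each `dᵢ`, `r̄ - σ₁` at `e`, and `r̄` at `f`. -/
noncomputable def chainReward (k : ℕ) (rbar σ₁ : ℝ) (s : ℕ) : ℝ :=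
  if s < k then 0 else if s = k then rbar - σ₁ else rbar

/-- A state trajectory `x` is valid on the time window `[a, b)` if each step it makes
inside the window is an allowed transition. -/
def ChainValidOn (k : ℕ) (x : ℕ → ℕ) (a b : ℕ) : Prop :=
  (∀ t, x t < k + 2) ∧ ∀ t, a ≤ t → t + 1 < b → chainStep k (x t) (x (t + 1))

/-- Total reward of trajectory `x` over the time window `[a, b)`. -/
noncomputable def chainTotal (k : ℕ) (rbar σ₁ : ℝ) (x : ℕ → ℕ) (a b : ℕ) : ℝ :=
  ∑ t ∈ Finset.Ico a b, chainReward k rbar σ₁ (x t)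

/-- Upper-bound value function. -/
noncomputable def chainW (k : ℕ) (rbar σ₁ : ℝ) (n s : ℕ) : ℝ :=
  if s ≤ k then max 0 (((n : ℝ) - ((k : ℝ) - s)) * (rbar - σ₁) + σ₁)
  else rbar + max 0 (((n : ℝ) - 1 - k) * (rbar - σ₁) + σ₁)

/-- Upper-bound value function for trajectories not ending at `f`. -/
noncomputable def chainWe (k : ℕ) (rbar σ₁ : ℝ) (n s : ℕ) : ℝ :=
  if s ≤ k then max 0 (((n : ℝ) - ((k : ℝ) - s)) * (rbar - σ₁))
  else rbar + max 0 (((n : ℝ) - 1 - k) * (rbar - σ₁))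

section aux
variable {k : ℕ} {rbar σ₁ : ℝ}

lemma add_max_le {c b d : ℝ} (h0 : c ≤ d) (h1 : c + b ≤ d) : c + max 0 b ≤ d := by
  rcases max_cases (0:ℝ) b with ⟨hm, _⟩ | ⟨hm, _⟩ <;> rw [hm] <;> linarith

lemma chainW_le {n s : ℕ} (hs : s ≤ k) :
    chainW k rbar σ₁ n s = max 0 (((n : ℝ) - ((k : ℝ) - s)) * (rbar - σ₁) + σ₁) := if_pos hs

lemma chainW_f {n : ℕ} :
    chainW k rbar σ₁ n (k + 1) = rbar + max 0 (((n : ℝ) - 1 - k) * (rbar - σ₁) + σ₁) :=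
  if_neg (by omega)

lemma chainWe_le {n s : ℕ} (hs : s ≤ k) :
    chainWe k rbar σ₁ n s = max 0 (((n : ℝ) - ((k : ℝ) - s)) * (rbar - σ₁)) := if_pos hs

lemma chainWe_f {n : ℕ} :
    chainWe k rbar σ₁ n (k + 1) = rbar + max 0 (((n : ℝ) - 1 - k) * (rbar - σ₁)) :=
  if_neg (by omega)

lemma chainReward_d {s : ℕ} (hs : s < k) : chainReward k rbar σ₁ s = 0 := if_pos hs

lemma chainReward_e : chainReward k rbar σ₁ k = rbar - σ₁ := by
  unfold chainReward; rw [if_neg (by omega), if_pos rfl]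

lemma chainReward_f : chainReward k rbar σ₁ (k + 1) = rbar := by
  unfold chainReward; rw [if_neg (by omega), if_neg (by omega)]

lemma chainW_nonneg (hr : 0 ≤ rbar) (n s : ℕ) : 0 ≤ chainW k rbar σ₁ n s := by
  unfold chainW; split_ifs
  · exact le_max_left _ _
  · have := le_max_left (0:ℝ) (((n : ℝ) - 1 - k) * (rbar - σ₁) + σ₁); linarith

lemma chainW_base (hr : 0 ≤ rbar) (hA : 0 ≤ rbar - σ₁) (hp : 0 ≤ σ₁)
    {s : ℕ} (hs : s < k + 2) : chainReward k rbar σ₁ s ≤ chainW k rbar σ₁ 1 s := by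
  rcases lt_trichotomy s k with h | h | h
  · rw [chainReward_d h, chainW_le h.le]; exact le_max_left _ _
  · subst h
    rw [chainReward_e, chainW_le le_rfl]
    refine le_max_of_le_right ?_
    push_cast; nlinarith
  · have hs' : s = k + 1 := by omega
    subst hs'
    rw [chainReward_f, chainW_f]
    have := le_max_left (0:ℝ) (((1 : ℕ) - 1 - (k:ℝ)) * (rbar - σ₁) + σ₁); linarith

lemma chainWe_base (hr : 0 ≤ rbar) (hA : 0 ≤ rbar - σ₁) (hp : 0 ≤ σ₁)
    {s : ℕ} (hs : s ≤ k) : chainReward k rbar σ₁ s ≤ chainWe k rbar σ₁ 1 s := by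
  rcases lt_or_eq_of_le hs with h | h
  · rw [chainReward_d h, chainWe_le hs]; exact le_max_left _ _
  · subst h
    rw [chainReward_e, chainWe_le le_rfl]
    refine le_max_of_le_right ?_
    push_cast; nlinarith

lemma chainW_step (hr : 0 ≤ rbar) (hA : 0 ≤ rbar - σ₁) (hp : 0 ≤ σ₁)
    (hs3 : rbar ≤ ((k:ℝ) + 1) * (rbar - σ₁))
    {s s' : ℕ} (h : chainStep k s s') (n : ℕ) :
    chainReward k rbar σ₁ s + chainW k rbar σ₁ (n + 1) s' ≤ chainW k rbar σ₁ (n + 2) s := by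
  have hn : (0:ℝ) ≤ (n:ℝ) := Nat.cast_nonneg n
  rcases h with ⟨hsk, h' | h'⟩ | ⟨hsk, h' | h'⟩ | ⟨hsk, h'⟩ <;> subst h'
  · -- s < k, stay
    rw [chainReward_d hsk, chainW_le hsk.le, chainW_le hsk.le, zero_add]
    exact max_le_max le_rfl (by push_cast; nlinarith)
  · -- s < k, move right
    have hsk' : s + 1 ≤ k := hsk
    rw [chainReward_d hsk, chainW_le hsk', chainW_le hsk.le, zero_add]
    exact max_le_max le_rfl (by push_cast; apply le_of_eq; ring)
  all_goals subst hsk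
  · -- s = k, stay
    rw [chainReward_e, chainW_le le_rfl, chainW_le le_rfl]
    refine le_max_of_le_right (add_max_le ?_ ?_) <;> push_cast <;> nlinarith
  · -- s = k, to f
    rw [chainReward_e, chainW_f, chainW_le le_rfl, ← add_assoc]
    refine le_max_of_le_right (add_max_le ?_ ?_) <;> push_cast <;> nlinarith
  · -- s = k+1, to 0
    rw [chainReward_f, chainW_f, chainW_le (Nat.zero_le k)]
    have heq : ((((n:ℕ)+1:ℕ)) - ((k:ℝ) - ((0:ℕ):ℝ))) * (rbar - σ₁) + σ₁
        = ((((n:ℕ)+2:ℕ)) - 1 - (k:ℝ)) * (rbar - σ₁) + σ₁ := by push_cast; ring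
    rw [heq]

lemma chainWe_step (hr : 0 ≤ rbar) (hA : 0 ≤ rbar - σ₁) (hp : 0 ≤ σ₁)
    (hs2 : 2 * σ₁ ≤ rbar) (hs3 : rbar ≤ ((k:ℝ) + 1) * (rbar - σ₁))
    {s s' : ℕ} (h : chainStep k s s') (n : ℕ) (hf : s' = k + 1 → 1 ≤ n) :
    chainReward k rbar σ₁ s + chainWe k rbar σ₁ (n + 1) s' ≤ chainWe k rbar σ₁ (n + 2) s := by
  have hn : (0:ℝ) ≤ (n:ℝ) := Nat.cast_nonneg n
  rcases h with ⟨hsk, h' | h'⟩ | ⟨hsk, h' | h'⟩ | ⟨hsk, h'⟩ <;> subst h'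
  · rw [chainReward_d hsk, chainWe_le hsk.le, chainWe_le hsk.le, zero_add]
    exact max_le_max le_rfl (by push_cast; nlinarith)
  · have hsk' : s + 1 ≤ k := hsk
    rw [chainReward_d hsk, chainWe_le hsk', chainWe_le hsk.le, zero_add]
    exact max_le_max le_rfl (by push_cast; apply le_of_eq; ring)
  all_goals subst hsk
  · rw [chainReward_e, chainWe_le le_rfl, chainWe_le le_rfl]
    refine le_max_of_le_right (add_max_le ?_ ?_) <;> push_cast <;> nlinarith
  · -- e to f : needs 1 ≤ n
    have hn1 : (1:ℝ) ≤ (n:ℝ) := by exact_mod_cast hf rfl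
    rw [chainReward_e, chainWe_f, chainWe_le le_rfl, ← add_assoc]
    refine le_max_of_le_right (add_max_le ?_ ?_) <;> push_cast <;> nlinarith
  · rw [chainReward_f, chainWe_f, chainWe_le (Nat.zero_le k)]
    have heq : ((((n:ℕ)+1:ℕ)) - ((k:ℝ) - ((0:ℕ):ℝ))) * (rbar - σ₁)
        = ((((n:ℕ)+2:ℕ)) - 1 - (k:ℝ)) * (rbar - σ₁) := by push_cast; ring
    rw [heq]

lemma chainTotal_succ_bot {x : ℕ → ℕ} {a b : ℕ} (h : a < b) :
    chainTotal k rbar σ₁ x a b = chainReward k rbar σ₁ (x a) + chainTotal k rbar σ₁ x (a + 1) b := by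
  unfold chainTotal
  exact Finset.sum_eq_sum_Ico_succ_bot h _

lemma chain_ub (hr : 0 ≤ rbar) (hA : 0 ≤ rbar - σ₁) (hp : 0 ≤ σ₁)
    (hs3 : rbar ≤ ((k:ℝ) + 1) * (rbar - σ₁)) :
    ∀ (n : ℕ) (x : ℕ → ℕ) (a : ℕ), (∀ t, x t < k + 2) →
      (∀ t, a ≤ t → t + 1 < a + n → chainStep k (x t) (x (t + 1))) →
      chainTotal k rbar σ₁ x a (a + n) ≤ chainW k rbar σ₁ n (x a) := by
  intro n
  induction n with
  | zero =>
    intro x a _ _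
    simp [chainTotal, chainW_nonneg hr]
  | succ m ih =>
    intro x a hb hstep
    rw [chainTotal_succ_bot (by omega)]
    match m with
    | 0 =>
      have : chainTotal k rbar σ₁ x (a + 1) (a + 1) = 0 := by simp [chainTotal]
      have h0 : a + 1 = a + 0 + 1 := by omega
      rw [show a + 1 = a + 1 from rfl, this] at *
      simpa using chainW_base hr hA hp (hb a)
    | m' + 1 =>
      have hstep0 : chainStep k (x a) (x (a + 1)) := hstep a le_rfl (by omega)
      have ihx : chainTotal k rbar σ₁ x (a + 1) ((a + 1) + (m' + 1)) ≤ chainW k rbar σ₁ (m' + 1) (x (a + 1)) :=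
        ih x (a + 1) hb (fun t ht ht' => hstep t (by omega) (by omega))
      have hrw : (a + 1) + (m' + 1) = a + (m' + 1 + 1) := by omega
      rw [hrw] at ihx
      calc chainReward k rbar σ₁ (x a) + chainTotal k rbar σ₁ x (a + 1) (a + (m' + 1 + 1))
          ≤ chainReward k rbar σ₁ (x a) + chainW k rbar σ₁ (m' + 1) (x (a + 1)) := by linarith
        _ ≤ chainW k rbar σ₁ (m' + 2) (x a) := chainW_step hr hA hp hs3 hstep0 m'

lemma chain_ubEnd (hr : 0 ≤ rbar) (hA : 0 ≤ rbar - σ₁) (hp : 0 ≤ σ₁)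
    (hs2 : 2 * σ₁ ≤ rbar) (hs3 : rbar ≤ ((k:ℝ) + 1) * (rbar - σ₁)) :
    ∀ (n : ℕ) (x : ℕ → ℕ) (a : ℕ), 1 ≤ n → (∀ t, x t < k + 2) →
      (∀ t, a ≤ t → t + 1 < a + n → chainStep k (x t) (x (t + 1))) →
      x (a + n - 1) ≠ k + 1 →
      chainTotal k rbar σ₁ x a (a + n) ≤ chainWe k rbar σ₁ n (x a) := by
  intro n
  induction n with
  | zero => omega
  | succ m ih =>
    intro x a _ hb hstep hlast
    rw [chainTotal_succ_bot (by omega)]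
    match m with
    | 0 =>
      have : chainTotal k rbar σ₁ x (a + 1) (a + 1) = 0 := by simp [chainTotal]
      have hxa : x a ≤ k := by
        have := hb a
        have : x a ≠ k + 1 := by simpa using hlast
        omega
      simpa [show a + 1 = a + 1 from rfl, this] using chainWe_base hr hA hp hxa
    | m' + 1 =>
      have hstep0 : chainStep k (x a) (x (a + 1)) := hstep a le_rfl (by omega)
      have hlast' : x ((a + 1) + (m' + 1) - 1) ≠ k + 1 := by
        have : (a + 1) + (m' + 1) - 1 = a + (m' + 1 + 1) - 1 := by omega
        rw [this]; exact hlast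
      have ihx := ih x (a + 1) (by omega) hb (fun t ht ht' => hstep t (by omega) (by omega)) hlast'
      have hrw : (a + 1) + (m' + 1) = a + (m' + 1 + 1) := by omega
      rw [hrw] at ihx
      have hf : x (a + 1) = k + 1 → 1 ≤ m' + 1 := fun _ => by omega
      calc chainReward k rbar σ₁ (x a) + chainTotal k rbar σ₁ x (a + 1) (a + (m' + 1 + 1))
          ≤ chainReward k rbar σ₁ (x a) + chainWe k rbar σ₁ (m' + 1) (x (a + 1)) := by linarith
        _ ≤ chainWe k rbar σ₁ (m' + 2) (x a) := chainWe_step hr hA hp hs2 hs3 hstep0 m' ?_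
      intro hx1
      -- if x (a+1) = k + 1 then m' ≥ 1, else x (a + (m'+2) - 1) = k+1 contradiction when m' = 0
      by_contra hcon
      have hm0 : m' = 0 := by omega
      subst hm0
      apply hlast
      have : a + (0 + 1 + 1) - 1 = a + 1 := by omega
      rw [this]; exact hx1

lemma chain_traj (hr : 0 ≤ rbar) (a m : ℕ) (hm : k + 2 ≤ m) :
    ∃ y : ℕ → ℕ, y a = 0 ∧ ChainValidOn k y a (a + m) ∧
      chainTotal k rbar σ₁ y a (a + m) = ((m : ℝ) - k) * (rbar - σ₁) + σ₁ := by
  refine ⟨fun t => if t + 1 < a + m then min (t - a) k else k + 1, ?_, ⟨?_, ?_⟩, ?_⟩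
  · simp only [if_pos (show a + 1 < a + m by omega)]
    simp
  · intro t
    dsimp only
    split_ifs <;> omega
  · intro t hta htb
    dsimp only
    simp only [if_pos htb]
    by_cases h2 : t + 1 + 1 < a + m
    · simp only [if_pos h2]
      rcases lt_or_ge (t - a) k with h | h
      · left
        refine ⟨by omega, Or.inr ?_⟩
        omega
      · right; left
        constructor
        · omega
        · left; omega
    · simp only [if_neg h2]
      right; left
      constructor
      · omega
      · right; rfl
  · unfold chainTotal
    rw [Finset.sum_Ico_eq_sum_range]
    have hma : a + m - a = m := by omega
    rw [hma]
    obtain ⟨M, rfl⟩ : ∃ M, m = M + 1 := ⟨m - 1, by omega⟩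
    rw [Finset.sum_range_succ]
    have hlast : chainReward k rbar σ₁ (if a + M + 1 < a + (M + 1) then min (a + M - a) k else k + 1)
        = rbar := by
      rw [if_neg (by omega), chainReward_f]
    have hbody : ∀ i ∈ Finset.range M,
        chainReward k rbar σ₁ (if a + i + 1 < a + (M + 1) then min (a + i - a) k else k + 1)
        = if i < k then 0 else rbar - σ₁ := by
      intro i hi
      rw [Finset.mem_range] at hi
      rw [if_pos (by omega)]
      have : a + i - a = i := by omega
      rw [this]
      rcases lt_or_ge i k with h | h
      · rw [if_pos h, min_eq_left h.le, chainReward_d h]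
      · rw [if_neg (by omega), min_eq_right h, chainReward_e]
    rw [Finset.sum_congr rfl hbody, hlast]
    rw [Finset.range_eq_Ico, ← Finset.sum_Ico_consecutive _ (Nat.zero_le k) (show k ≤ M by omega)]
    have h1 : ∑ i ∈ Finset.Ico 0 k, (if i < k then (0:ℝ) else rbar - σ₁) = 0 := by
      apply Finset.sum_eq_zero
      intro i hi
      rw [Finset.mem_Ico] at hi
      rw [if_pos hi.2]
    have h2 : ∑ i ∈ Finset.Ico k M, (if i < k then (0:ℝ) else rbar - σ₁)
        = ((M : ℝ) - k) * (rbar - σ₁) := by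
      rw [Finset.sum_congr rfl (fun i hi => ?_), Finset.sum_const, Nat.card_Ico,
        nsmul_eq_mul]
      · rw [Nat.cast_sub (by omega)]
      · rw [Finset.mem_Ico] at hi
        rw [if_neg (by omega)]
    rw [h1, h2]
    push_cast
    ring

lemma chain_greatest (hr : 0 ≤ rbar) (hA : 0 ≤ rbar - σ₁) (hp : 0 ≤ σ₁)
    (hs3 : rbar ≤ ((k:ℝ) + 1) * (rbar - σ₁)) (a m : ℕ) (hm : k + 2 ≤ m) :
    IsGreatest {v | ∃ y : ℕ → ℕ, y a = 0 ∧ ChainValidOn k y a (a + m) ∧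
        v = chainTotal k rbar σ₁ y a (a + m)} (((m : ℝ) - k) * (rbar - σ₁) + σ₁) := by
  constructor
  · obtain ⟨y, hy0, hval, htot⟩ := chain_traj hr a m hm
    exact ⟨y, hy0, hval, htot.symm⟩
  · rintro v ⟨y, hy0, ⟨hyb, hys⟩, rfl⟩
    have hub := chain_ub hr hA hp hs3 m y a hyb hys
    rw [hy0, chainW_le (Nat.zero_le k)] at hub
    have hkm : (0:ℝ) ≤ ((m:ℝ) - ((k:ℝ) - ((0:ℕ):ℝ))) * (rbar - σ₁) + σ₁ := by
      push_cast
      have : (k:ℝ) + 2 ≤ (m:ℝ) := by exact_mod_cast hm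
      nlinarith
    rw [max_eq_right hkm] at hub
    calc chainTotal k rbar σ₁ y a (a + m)
        ≤ ((m:ℝ) - ((k:ℝ) - ((0:ℕ):ℝ))) * (rbar - σ₁) + σ₁ := hub
      _ = ((m : ℝ) - k) * (rbar - σ₁) + σ₁ := by push_cast; ring

lemma chain_endf (hr : 0 ≤ rbar) (hA : 0 ≤ rbar - σ₁) (hp : 0 < σ₁)
    (hs2 : 2 * σ₁ ≤ rbar) (hs3 : rbar ≤ ((k:ℝ) + 1) * (rbar - σ₁)) (a m : ℕ) (hm : k + 2 ≤ m)
    (y : ℕ → ℕ) (hy0 : y a = 0) (hyb : ∀ t, y t < k + 2)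
    (hys : ∀ t, a ≤ t → t + 1 < a + m → chainStep k (y t) (y (t + 1)))
    (hval : chainTotal k rbar σ₁ y a (a + m) = ((m : ℝ) - k) * (rbar - σ₁) + σ₁) :
    y (a + m - 1) = k + 1 := by
  by_contra hne
  have hub := chain_ubEnd hr hA hp.le hs2 hs3 m y a (by omega) hyb hys hne
  rw [hy0, chainWe_le (Nat.zero_le k)] at hub
  have hkm : (0:ℝ) ≤ ((m:ℝ) - ((k:ℝ) - ((0:ℕ):ℝ))) * (rbar - σ₁) := by
    push_cast
    have : (k:ℝ) + 2 ≤ (m:ℝ) := by exact_mod_cast hm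
    nlinarith
  rw [max_eq_right hkm] at hub
  rw [hval] at hub
  push_cast at hub
  linarith

end aux

theorem stmt4 (rbar σ : ℝ) (k T : ℕ) (hr : 0 < rbar) (hσ : 0 < σ) (hσ' : σ < rbar / 2)
    (hk : 3 ≤ k) (hT : 2 * k + 6 < T) (hTeven : Even T)
    (σ₁ : ℝ) (hσ₁ : σ₁ = σ / (k + 1)) :
    -- the optimal total reward over the full horizon, starting deterministically at `d₁`
    IsGreatest {v | ∃ x : ℕ → ℕ, x 0 = 0 ∧ ChainValidOn k x 0 T ∧ v = chainTotal k rbar σ₁ x 0 T}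
      (((T : ℝ) - k) * (rbar - σ₁) + σ₁) ∧
    -- the total reward of the temporal-concatenation policy: any valid trajectory from `d₁`
    -- that is optimal on the first half-horizon among half-horizon trajectories from `d₁`,
    -- and optimal on the second half-horizon among trajectories from its state at time `T/2`
    (∀ x : ℕ → ℕ, x 0 = 0 → ChainValidOn k x 0 T →
      IsGreatest {v | ∃ y : ℕ → ℕ, y 0 = 0 ∧ ChainValidOn k y 0 (T / 2) ∧
          v = chainTotal k rbar σ₁ y 0 (T / 2)} (chainTotal k rbar σ₁ x 0 (T / 2)) →
      IsGreatest {v | ∃ y : ℕ → ℕ, y (T / 2) = x (T / 2) ∧ ChainValidOn k y (T / 2) T ∧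
          v = chainTotal k rbar σ₁ y (T / 2) T} (chainTotal k rbar σ₁ x (T / 2) T) →
      chainTotal k rbar σ₁ x 0 T = 2 * ((((T / 2 : ℕ) : ℝ) - k) * (rbar - σ₁) + σ₁)) ∧
    -- hence the regret
    (((T : ℝ) - k) * (rbar - σ₁) + σ₁ - 2 * ((((T / 2 : ℕ) : ℝ) - k) * (rbar - σ₁) + σ₁)
      = k * rbar - (k + 1) * σ₁ ∧
     ((T : ℝ) - k) * (rbar - σ₁) + σ₁ - 2 * ((((T / 2 : ℕ) : ℝ) - k) * (rbar - σ₁) + σ₁)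
      = k * rbar - σ) := by
  have hkr : (3:ℝ) ≤ (k:ℝ) := by exact_mod_cast hk
  have hks : ((k:ℝ) + 1) * σ₁ = σ := by
    rw [hσ₁]; field_simp
  have hp : 0 < σ₁ := by
    rw [hσ₁]; positivity
  have hmul : (0:ℝ) ≤ σ₁ * ((k:ℝ) - 3) := mul_nonneg hp.le (by linarith)
  have hs2 : 2 * σ₁ ≤ rbar := by nlinarith
  have hA : 0 ≤ rbar - σ₁ := by nlinarith
  have hs3 : rbar ≤ ((k:ℝ) + 1) * (rbar - σ₁) := by nlinarith
  obtain ⟨c, hc⟩ := hTeven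
  have hhalf : T / 2 + T / 2 = T := by omega
  have hm2 : k + 2 ≤ T / 2 := by omega
  refine ⟨?_, ?_, ?_, ?_⟩
  · have G := chain_greatest hr.le hA hp.le hs3 0 T (by omega)
    simpa only [Nat.zero_add] using G
  · intro x hx0 hxval h1 h2
    have G1 := chain_greatest hr.le hA hp.le hs3 0 (T / 2) hm2
    simp only [Nat.zero_add] at G1
    have hx1 : chainTotal k rbar σ₁ x 0 (T / 2)
        = (((T / 2 : ℕ) : ℝ) - k) * (rbar - σ₁) + σ₁ := h1.unique G1
    have hz : 0 + T / 2 = T / 2 := Nat.zero_add _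
    have hendf : x (0 + T / 2 - 1) = k + 1 :=
      chain_endf hr.le hA hp hs2 hs3 0 (T / 2) hm2 x hx0 hxval.1
        (fun t ht ht' => hxval.2 t ht (by omega)) (by rw [hz, hx1])
    rw [hz] at hendf
    have hstep : chainStep k (x (T / 2 - 1)) (x (T / 2 - 1 + 1)) :=
      hxval.2 (T / 2 - 1) (Nat.zero_le _) (by omega)
    have ht12 : T / 2 - 1 + 1 = T / 2 := by omega
    rw [ht12, hendf] at hstep
    have hxm : x (T / 2) = 0 := by
      rcases hstep with ⟨h, _⟩ | ⟨h, _⟩ | ⟨_, h⟩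
      · omega
      · omega
      · exact h
    have G2 := chain_greatest hr.le hA hp.le hs3 (T / 2) (T / 2) hm2
    simp only [hhalf] at G2
    simp only [hxm] at h2
    have hx2 : chainTotal k rbar σ₁ x (T / 2) T
        = (((T / 2 : ℕ) : ℝ) - k) * (rbar - σ₁) + σ₁ := h2.unique G2
    have hsplit : chainTotal k rbar σ₁ x 0 T
        = chainTotal k rbar σ₁ x 0 (T / 2) + chainTotal k rbar σ₁ x (T / 2) T := by
      unfold chainTotal
      rw [← Finset.sum_Ico_consecutive _ (Nat.zero_le (T / 2)) (show T / 2 ≤ T by omega)]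
    rw [hsplit, hx1, hx2]
    ring
  · have hTc : ((T / 2 : ℕ) : ℝ) + ((T / 2 : ℕ) : ℝ) = (T : ℝ) := by exact_mod_cast hhalf
    rw [show ((T:ℝ)) = ((T / 2 : ℕ) : ℝ) + ((T / 2 : ℕ) : ℝ) from hTc.symm]
    ring
  · have hTc : ((T / 2 : ℕ) : ℝ) + ((T / 2 : ℕ) : ℝ) = (T : ℝ) := by exact_mod_cast hhalf
    rw [show ((T:ℝ)) = ((T / 2 : ℕ) : ℝ) + ((T / 2 : ℕ) : ℝ) from hTc.symm]
    linarith [hks]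
end

section
/- In the deterministic MDP on states {d₁,…,d_k, e, f} with transitions as described (from dᵢ: stay or go right; from e: stay or go to f; from f: forced move to d₁), the 0-diameter—the least t such that from any state distribution and any starting time, any target distribution over the states is exactly reachable in t steps by some (possibly randomized) policy—equals k + 2. -/
open Finset

/-- A (one-step, possibly randomized) transition kernel supported on the allowed
transitions of the MDP. -/
def IsKernel {V : Type*} [Fintype V] (step : V → V → Prop) (K : V → V → ℝ) : Prop :=
  (∀ s s', 0 ≤ K s s') ∧ (∀ s, ∑ s', K s s' = 1) ∧ (∀ s s', 0 < K s s' → step s s')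

/-- Evolution of a state distribution under a sequence of kernels. -/
def evolve {V : Type*} [Fintype V] (K : ℕ → V → V → ℝ) (ν : V → ℝ) : ℕ → V → ℝ
  | 0 => ν
  | t + 1 => fun s' => ∑ s, evolve K ν t s * K t s s'

/-- `ν'` is (exactly) reachable from `ν` in `t` steps: some randomized policy drives the
state distribution from `ν` to `ν'` in exactly `t` steps. -/
def ReachableIn {V : Type*} [Fintype V] (step : V → V → Prop) (ν ν' : V → ℝ) (t : ℕ) : Prop :=
  ∃ K : ℕ → V → V → ℝ, (∀ j, IsKernel step (K j)) ∧ evolve K ν t = ν'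

/-- `ν` is a probability distribution. -/
def IsProbDist {V : Type*} [Fintype V] (ν : V → ℝ) : Prop :=
  (∀ s, 0 ≤ ν s) ∧ ∑ s, ν s = 1

/-- The 0-diameter: the least `t` such that every probability distribution is exactly
reachable from every other in `t` steps. -/
noncomputable def zeroDiameter {V : Type*} [Fintype V] (step : V → V → Prop) : ℕ :=
  sInf {t | ∀ ν ν' : V → ℝ, IsProbDist ν → IsProbDist ν' → ReachableIn step ν ν' t}

/-! Between any two states there is a walk of length exactly `k + 2`: wait at a state with a
self-loop, then go round the cycle (starting at `f`, first move to `d₁`). Drawing the walk from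
`s` to `s'` with probability `ν s * ν' s'` gives a random path with law `ν` at time `0` and `ν'`
at time `k + 2`; its one-step conditional transition probabilities form a Markov policy with the
same marginals. Conversely, mass started at `f` cannot return to `f` in fewer than `k + 2` steps,
and in `0` steps nothing moves. -/

section WalkMixture

variable {V ι : Type*} [DecidableEq V] [Fintype ι]

def walkMarginal (w : ι → ℝ) (γ : ι → ℕ → V) (t : ℕ) (x : V) : ℝ :=
  ∑ i with γ i t = x, w i

def walkFlow (w : ι → ℝ) (γ : ι → ℕ → V) (t : ℕ) (x y : V) : ℝ :=
  ∑ i with γ i t = x ∧ γ i (t + 1) = y, w i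

variable {w : ι → ℝ} {γ : ι → ℕ → V} {D : V → V → ℝ} {T : ℕ}

lemma walkMarginal_nonneg (hw : ∀ i, 0 ≤ w i) (t : ℕ) (x : V) : 0 ≤ walkMarginal w γ t x :=
  sum_nonneg fun i _ => hw i

lemma walkFlow_nonneg (hw : ∀ i, 0 ≤ w i) (t : ℕ) (x y : V) : 0 ≤ walkFlow w γ t x y :=
  sum_nonneg fun i _ => hw i

lemma walkFlow_le_walkMarginal (hw : ∀ i, 0 ≤ w i) (t : ℕ) (x y : V) :
    walkFlow w γ t x y ≤ walkMarginal w γ t x :=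
  sum_le_sum_of_subset_of_nonneg (monotone_filter_right _ fun _ _ h => h.1) fun i _ _ => hw i

lemma exists_of_walkFlow_ne_zero {t : ℕ} {x y : V} (h : walkFlow w γ t x y ≠ 0) :
    ∃ i, γ i t = x ∧ γ i (t + 1) = y := by
  obtain ⟨i, hi⟩ := nonempty_of_sum_ne_zero h
  exact ⟨i, (mem_filter.mp hi).2⟩

/-- Up to time `T`, the Markov kernel that moves mass along the walks in proportion to their
weights; `D` is used where it does not matter. -/
noncomputable def walkKernel (D : V → V → ℝ) (w : ι → ℝ) (γ : ι → ℕ → V) (T t : ℕ) (x y : V) :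
    ℝ :=
  if t < T ∧ walkMarginal w γ t x ≠ 0 then walkFlow w γ t x y / walkMarginal w γ t x
  else D x y

lemma walkMarginal_mul_walkKernel (hw : ∀ i, 0 ≤ w i) {t : ℕ} (ht : t < T) (x y : V) :
    walkMarginal w γ t x * walkKernel D w γ T t x y = walkFlow w γ t x y := by
  by_cases hx : walkMarginal w γ t x = 0
  · rw [hx, zero_mul]
    exact (le_antisymm (hx ▸ walkFlow_le_walkMarginal hw t x y) (walkFlow_nonneg hw t x y)).symm
  · rw [walkKernel, if_pos ⟨ht, hx⟩, mul_div_cancel₀ _ hx]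

variable [Fintype V]

lemma sum_walkFlow_right (t : ℕ) (x : V) : ∑ y, walkFlow w γ t x y = walkMarginal w γ t x := by
  simp only [walkFlow, walkMarginal, ← filter_filter]
  exact sum_fiberwise _ _ _

lemma sum_walkFlow_left (t : ℕ) (y : V) :
    ∑ x, walkFlow w γ t x y = walkMarginal w γ (t + 1) y := by
  simp only [walkFlow, walkMarginal, and_comm (a := γ _ t = _), ← filter_filter]
  exact sum_fiberwise _ _ _

lemma isKernel_walkKernel {step : V → V → Prop} (hD : IsKernel step D) (hw : ∀ i, 0 ≤ w i)
    (hγ : ∀ i, ∀ t < T, step (γ i t) (γ i (t + 1))) (t : ℕ) :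
    IsKernel step (walkKernel D w γ T t) := by
  refine ⟨fun x y => ?_, fun x => ?_, fun x y hxy => ?_⟩ <;> unfold walkKernel at * <;>
    split_ifs at * with h
  · exact div_nonneg (walkFlow_nonneg hw t x y) (walkMarginal_nonneg hw t x)
  · exact hD.1 x y
  · rw [← sum_div, sum_walkFlow_right, div_self h.2]
  · exact hD.2.1 x
  · obtain ⟨i, rfl, rfl⟩ := exists_of_walkFlow_ne_zero (div_ne_zero_iff.mp hxy.ne').1
    exact hγ i t h.1
  · exact hD.2.2 x y hxy

lemma evolve_walkKernel (hw : ∀ i, 0 ≤ w i) {t : ℕ} (ht : t ≤ T) :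
    evolve (walkKernel D w γ T) (walkMarginal w γ 0) t = walkMarginal w γ t := by
  induction t with
  | zero => rfl
  | succ t ih =>
    funext y
    simp only [evolve, ih (by omega), walkMarginal_mul_walkKernel hw (Nat.lt_of_succ_le ht),
      sum_walkFlow_left]

lemma reachableIn_walkMarginal {step : V → V → Prop} (hD : IsKernel step D) (hw : ∀ i, 0 ≤ w i)
    (hγ : ∀ i, ∀ t < T, step (γ i t) (γ i (t + 1))) :
    ReachableIn step (walkMarginal w γ 0) (walkMarginal w γ T) T :=
  ⟨walkKernel D w γ T, isKernel_walkKernel hD hw hγ, evolve_walkKernel hw le_rfl⟩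

end WalkMixture

lemma isProbDist_pi_single {V : Type*} [Fintype V] [DecidableEq V] (x : V) :
    IsProbDist (Pi.single x 1 : V → ℝ) :=
  ⟨(Pi.single_nonneg.mpr zero_le_one : (0 : V → ℝ) ≤ Pi.single x 1), Fintype.sum_pi_single' _ _⟩

lemma isKernel_pi_single {V : Type*} [Fintype V] [DecidableEq V] {step : V → V → Prop}
    {f : V → V} (hf : ∀ x, step x (f x)) : IsKernel step fun x => Pi.single (f x) 1 := by
  refine ⟨fun x => (isProbDist_pi_single (f x)).1, fun x => (isProbDist_pi_single (f x)).2,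
    fun x y h => ?_⟩
  by_cases hy : y = f x
  · exact hy ▸ hf x
  · simp [hy] at h

def HasWalk {V : Type*} (step : V → V → Prop) (n : ℕ) (s s' : V) : Prop :=
  ∃ γ : ℕ → V, γ 0 = s ∧ γ n = s' ∧ ∀ t < n, step (γ t) (γ (t + 1))

lemma HasWalk.cons {V : Type*} {step : V → V → Prop} {n : ℕ} {s u s' : V} (hsu : step s u)
    (h : HasWalk step n u s') : HasWalk step (n + 1) s s' := by
  obtain ⟨γ, h0, hn, hγ⟩ := h
  refine ⟨fun | 0 => s | t + 1 => γ t, rfl, hn, fun t ht => ?_⟩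
  rcases t with _ | t
  · show step s (γ 0)
    rwa [h0]
  · exact hγ t (by omega)

theorem reachableIn_of_forall_hasWalk {V : Type*} [Fintype V] [DecidableEq V]
    {step : V → V → Prop} {T : ℕ} (hT : 0 < T) (hwalk : ∀ s s', HasWalk step T s s')
    {ν ν' : V → ℝ} (hν : IsProbDist ν) (hν' : IsProbDist ν') : ReachableIn step ν ν' T := by
  choose γ hγ0 hγT hγ using hwalk
  have hD := isKernel_pi_single fun x => hγ0 x x ▸ hγ x x 0 hT
  have hw : ∀ p : V × V, 0 ≤ ν p.1 * ν' p.2 := fun p => mul_nonneg (hν.1 _) (hν'.1 _)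
  convert reachableIn_walkMarginal hD hw fun p => hγ p.1 p.2 using 1 <;> funext x <;>
    simp [walkMarginal, hγ0, hγT, sum_filter, Fintype.sum_prod_type, ← mul_sum, ← sum_mul, hν.2,
      hν'.2]

lemma evolve_nonneg {V : Type*} [Fintype V] {K : ℕ → V → V → ℝ} (hK : ∀ j s s', 0 ≤ K j s s')
    {ν : V → ℝ} (hν : ∀ s, 0 ≤ ν s) (t : ℕ) (s : V) : 0 ≤ evolve K ν t s := by
  induction t generalizing s with
  | zero => exact hν s
  | succ t ih => exact sum_nonneg fun x _ => mul_nonneg (ih x) (hK t x s)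

lemma exists_step_of_evolve_succ_pos {V : Type*} [Fintype V] {step : V → V → Prop}
    {K : ℕ → V → V → ℝ} (hK : ∀ j, IsKernel step (K j)) {ν : V → ℝ} (hν : ∀ s, 0 ≤ ν s)
    {t : ℕ} {y : V} (h : 0 < evolve K ν (t + 1) y) : ∃ x, 0 < evolve K ν t x ∧ step x y := by
  have h' : ∑ _x : V, (0 : ℝ) < ∑ x, evolve K ν t x * K t x y := by rw [sum_const_zero]; exact h
  obtain ⟨x, -, hx⟩ := exists_lt_of_sum_lt h'
  have he := evolve_nonneg (fun j => (hK j).1) hν t x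
  refine ⟨x, he.lt_of_ne ?_, (hK t).2.2 x y (((hK t).1 x y).lt_of_ne ?_)⟩ <;>
    rintro h0 <;> simp [← h0] at hx

section Chain

variable {k : ℕ}

lemma chainStep_add_one (s : Fin (k + 2)) : chainStep k s.val (s + 1).val := by
  rw [Fin.val_add_one]
  split_ifs with h
  · exact Or.inr (Or.inr ⟨by simp [h], rfl⟩)
  · have : s.val ≠ k + 1 := fun h' => h (Fin.ext h')
    unfold chainStep
    omega

lemma chainStep_self {s : Fin (k + 2)} (hs : s ≠ Fin.last (k + 1)) : chainStep k s.val s.val := by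
  have : s.val ≠ k + 1 := fun h => hs (Fin.ext h)
  unfold chainStep
  omega

open Fin.NatCast in
/-- Wait at `u` as long as needed, then move forward around the cycle to `s'`. -/
lemma hasWalk_chain_of_ne_last {u : Fin (k + 2)} (hu : u ≠ Fin.last (k + 1)) (s' : Fin (k + 2))
    {n : ℕ} (hn : (s' - u).val ≤ n) :
    HasWalk (fun s s' : Fin (k + 2) => chainStep k s s') n u s' := by
  refine ⟨fun t => u + ((t - (n - (s' - u).val) : ℕ) : Fin (k + 2)), by simp, ?_, fun t _ => ?_⟩
  · simp [Nat.sub_sub_self hn]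
  · by_cases ht : t < n - (s' - u).val
    · simp [Nat.sub_eq_zero_of_le ht.le, Nat.sub_eq_zero_of_le ht, chainStep_self hu]
    · dsimp only
      rw [Nat.sub_add_comm (not_lt.mp ht), Nat.cast_succ, ← add_assoc]
      exact chainStep_add_one _

lemma hasWalk_chain (s s' : Fin (k + 2)) :
    HasWalk (fun s s' : Fin (k + 2) => chainStep k s s') (k + 2) s s' := by
  by_cases hs : s = Fin.last (k + 1)
  · subst hs
    refine HasWalk.cons (chainStep_add_one (Fin.last (k + 1))) ?_
    rw [Fin.last_add_one]
    exact hasWalk_chain_of_ne_last Fin.last_pos.ne s' (by simp; omega)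
  · exact hasWalk_chain_of_ne_last hs s' (s' - s).isLt.le

lemma val_le_of_evolve_single_last_pos {K : ℕ → Fin (k + 2) → Fin (k + 2) → ℝ}
    (hK : ∀ j, IsKernel (fun s s' : Fin (k + 2) => chainStep k s s') (K j)) {t : ℕ} (ht : t ≤ k)
    {x : Fin (k + 2)} (hx : 0 < evolve K (Pi.single (Fin.last (k + 1)) 1) (t + 1) x) :
    x.val ≤ t := by
  have hν := (isProbDist_pi_single (Fin.last (k + 1))).1
  induction t generalizing x with
  | zero =>
    obtain ⟨x', hx', hstep⟩ := exists_step_of_evolve_succ_pos hK hν hx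
    obtain rfl : x' = Fin.last (k + 1) := by
      by_contra h
      simp [evolve, h] at hx'
    unfold chainStep at hstep
    simp only [Fin.val_last] at hstep
    omega
  | succ t ih =>
    obtain ⟨x', hx', hstep⟩ := exists_step_of_evolve_succ_pos hK hν hx
    have := ih (by omega) hx'
    unfold chainStep at hstep
    omega

lemma not_forall_reachableIn_chain {t : ℕ} (ht : t < k + 2) :
    ¬ ∀ ν ν' : Fin (k + 2) → ℝ, IsProbDist ν → IsProbDist ν' →
      ReachableIn (fun s s' : Fin (k + 2) => chainStep k s s') ν ν' t := by
  intro h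
  rcases t with _ | t
  · obtain ⟨K, -, hK⟩ := h (Pi.single 0 1) (Pi.single (Fin.last (k + 1)) 1)
      (isProbDist_pi_single _) (isProbDist_pi_single _)
    simpa [evolve, Fin.last_pos.ne] using congrFun hK 0
  · obtain ⟨K, hK, he⟩ := h (Pi.single (Fin.last (k + 1)) 1) (Pi.single (Fin.last (k + 1)) 1)
      (isProbDist_pi_single _) (isProbDist_pi_single _)
    have := val_le_of_evolve_single_last_pos hK (by omega : t ≤ k) (x := Fin.last (k + 1))
      (by simp [he])
    simp only [Fin.val_last] at this
    omega

end Chain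

theorem stmt5_general (k : ℕ) :
    zeroDiameter (fun s s' : Fin (k + 2) => chainStep k s.val s'.val) = k + 2 := by
  have hmem : k + 2 ∈ {t | ∀ ν ν' : Fin (k + 2) → ℝ, IsProbDist ν → IsProbDist ν' →
      ReachableIn (fun s s' : Fin (k + 2) => chainStep k s.val s'.val) ν ν' t} :=
    fun ν ν' hν hν' => reachableIn_of_forall_hasWalk (by omega) hasWalk_chain hν hν'
  exact le_antisymm (Nat.sInf_le hmem)
    (not_lt.mp fun hlt => not_forall_reachableIn_chain hlt (Nat.sInf_mem ⟨_, hmem⟩))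

theorem stmt5 (k : ℕ) (hk : 1 ≤ k) :
    zeroDiameter (fun s s' : Fin (k + 2) => chainStep k s.val s'.val) = k + 2 :=
  stmt5_general k
end
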